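/- arXiv:2011.03935 — 6 statements merged into one kernel-verified Lean document; each statement's English description precedes it below -/
import Mathlib

section
/- Let ζ ∈ {1, −1, i, −i} ⊂ ℂ. For every x ∈ ℂ^M, x belongs to the symbol-level-precoding feasible set F(d) if and only if ζ·x belongs to F(ζ·d); equivalently, F(ζ·d) is the image of F(d) under multiplication by ζ. -/
open Complex

/-- The sign-aligned exceedance relation `R(a,b)`. -/
def signAligned (a b : ℝ) : Prop := (0 ≤ b ∧ b ≤ a) ∨ (b ≤ 0 ∧ a ≤ b)

/-- The symbol-level-precoding feasible set `F(d)` for channel rows `h j`,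
noise level `σ`, SNR targets `γ j` and data vector `d`. -/
def slpFeasible {M K : ℕ} (h : Fin K → Fin M → ℂ) (σ : ℝ) (γ : Fin K → ℝ)
    (d : Fin K → ℂ) : Set (EuclideanSpace ℂ (Fin M)) :=
  {x | ∀ j : Fin K,
    signAligned (∑ m, h j m * x m).re (σ * Real.sqrt (γ j) * (d j).re) ∧
    signAligned (∑ m, h j m * x m).im (σ * Real.sqrt (γ j) * (d j).im)}

lemma sa_neg (a b : ℝ) : signAligned (-a) (-b) ↔ signAligned a b := by
  unfold signAligned
  constructor <;> rintro (⟨h1, h2⟩ | ⟨h1, h2⟩)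
  · right; constructor <;> linarith
  · left; constructor <;> linarith
  · right; constructor <;> linarith
  · left; constructor <;> linarith

lemma key_pt (c : ℝ) (z w ζ : ℂ)
    (hζ : ζ ∈ ({1, -1, Complex.I, -Complex.I} : Set ℂ)) :
    (signAligned z.re (c * w.re) ∧ signAligned z.im (c * w.im)) ↔
    (signAligned (ζ * z).re (c * (ζ * w).re) ∧
      signAligned (ζ * z).im (c * (ζ * w).im)) := by
  simp only [Set.mem_insert_iff, Set.mem_singleton_iff] at hζ
  rcases hζ with rfl | rfl | rfl | rfl <;>
    simp [Complex.mul_re, Complex.mul_im, mul_neg, sa_neg, and_comm]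

theorem stmt_0 {M K : ℕ} (h : Fin K → Fin M → ℂ) (σ : ℝ) (hσ : 0 < σ)
    (γ : Fin K → ℝ) (hγ : ∀ j, 0 < γ j) (d : Fin K → ℂ) (ζ : ℂ)
    (hζ : ζ ∈ ({1, -1, Complex.I, -Complex.I} : Set ℂ)) :
    (∀ x : EuclideanSpace ℂ (Fin M),
        x ∈ slpFeasible h σ γ d ↔ ζ • x ∈ slpFeasible h σ γ (ζ • d)) ∧
    slpFeasible h σ γ (ζ • d) = (fun x => ζ • x) '' slpFeasible h σ γ d := by
  have hζ0 : ζ ≠ 0 := by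
    rcases hζ with rfl | rfl | rfl | rfl <;> simp [Complex.I_ne_zero]
  have hsum : ∀ (j : Fin K) (x : EuclideanSpace ℂ (Fin M)),
      (∑ m, h j m * (ζ • x) m) = ζ * ∑ m, h j m * x m := by
    intro j x
    rw [Finset.mul_sum]
    refine Finset.sum_congr rfl fun m _ => ?_
    show h j m * (ζ * x m) = _
    ring
  have key : ∀ x : EuclideanSpace ℂ (Fin M),
      x ∈ slpFeasible h σ γ d ↔ ζ • x ∈ slpFeasible h σ γ (ζ • d) := by
    intro x
    unfold slpFeasible
    simp only [Set.mem_setOf_eq, hsum, Pi.smul_apply, smul_eq_mul]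
    exact forall_congr' fun j =>
      key_pt (σ * Real.sqrt (γ j)) (∑ m, h j m * x m) (d j) ζ hζ
  refine ⟨key, ?_⟩
  ext y
  constructor
  · intro hy
    refine ⟨ζ⁻¹ • y, ?_, ?_⟩
    · rw [key (ζ⁻¹ • y), smul_smul, mul_inv_cancel₀ hζ0, one_smul]
      exact hy
    · simp [smul_smul, mul_inv_cancel₀ hζ0]
  · rintro ⟨x, hx, rfl⟩
    exact (key x).mp hx
end

section
/- Let ζ ∈ {1, −1, i, −i} ⊂ ℂ. If x ∈ ℂ^M minimizes the Euclidean norm over the symbol-level-precoding feasible set F(d) (i.e., x ∈ F(d) and ‖x‖ ≤ ‖y‖ for all y ∈ F(d)), then ζ·x minimizes the Euclidean norm over F(ζ·d). -/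
open Complex

lemma signAligned_neg {a b : ℝ} (hab : signAligned a b) : signAligned (-a) (-b) := by
  rcases hab with ⟨h1, h2⟩ | ⟨h1, h2⟩
  · exact Or.inr ⟨by linarith, by linarith⟩
  · exact Or.inl ⟨by linarith, by linarith⟩

lemma slp_smul_mem {M K : ℕ} (h : Fin K → Fin M → ℂ) (σ : ℝ) (γ : Fin K → ℝ)
    (d : Fin K → ℂ) (ζ : ℂ) (hζ : ζ ∈ ({1, -1, Complex.I, -Complex.I} : Set ℂ))
    (x : EuclideanSpace ℂ (Fin M)) (hx : x ∈ slpFeasible h σ γ d) :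
    ζ • x ∈ slpFeasible h σ γ (ζ • d) := by
  intro j
  obtain ⟨h1, h2⟩ := hx j
  have hsum : ∑ m, h j m * (ζ • x) m = ζ * ∑ m, h j m * x m := by
    rw [Finset.mul_sum]
    refine Finset.sum_congr rfl fun m _ => ?_
    simp [PiLp.smul_apply, smul_eq_mul]; ring
  simp only [Set.mem_insert_iff, Set.mem_singleton_iff] at hζ
  rcases hζ with rfl | rfl | rfl | rfl
  · simp only [one_smul]; exact ⟨h1, h2⟩
  · rw [slpFeasible] at *
    simp only [Set.mem_setOf_eq, hsum, Pi.smul_apply, smul_eq_mul, neg_one_mul,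
      Complex.neg_re, Complex.neg_im, mul_neg]
    exact ⟨signAligned_neg h1, signAligned_neg h2⟩
  · rw [slpFeasible] at *
    simp only [Set.mem_setOf_eq, hsum, Pi.smul_apply, smul_eq_mul, Complex.mul_re,
      Complex.mul_im, Complex.I_re, Complex.I_im, zero_mul, one_mul, zero_sub,
      sub_zero, zero_add, add_zero, mul_zero, mul_neg]
    exact ⟨signAligned_neg h2, h1⟩
  · rw [slpFeasible] at *
    simp only [Set.mem_setOf_eq, hsum, Pi.smul_apply, smul_eq_mul, Complex.mul_re,
      Complex.mul_im, Complex.neg_re, Complex.neg_im, Complex.I_re, Complex.I_im,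
      neg_zero, neg_neg, zero_mul, one_mul, zero_sub, sub_zero, zero_add, add_zero,
      mul_zero, mul_neg, neg_mul, sub_neg_eq_add]
    constructor
    · convert h2 using 2 <;> ring
    · convert signAligned_neg h1 using 2 <;> ring

theorem stmt_1 {M K : ℕ} (h : Fin K → Fin M → ℂ) (σ : ℝ) (hσ : 0 < σ)
    (γ : Fin K → ℝ) (hγ : ∀ j, 0 < γ j) (d : Fin K → ℂ) (ζ : ℂ)
    (hζ : ζ ∈ ({1, -1, Complex.I, -Complex.I} : Set ℂ))
    (x : EuclideanSpace ℂ (Fin M))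
    (hx : x ∈ slpFeasible h σ γ d)
    (hmin : ∀ y ∈ slpFeasible h σ γ d, ‖x‖ ≤ ‖y‖) :
    ζ • x ∈ slpFeasible h σ γ (ζ • d) ∧
      ∀ y ∈ slpFeasible h σ γ (ζ • d), ‖ζ • x‖ ≤ ‖y‖ := by
  have hζ' : ζ⁻¹ ∈ ({1, -1, Complex.I, -Complex.I} : Set ℂ) := by
    simp only [Set.mem_insert_iff, Set.mem_singleton_iff] at hζ ⊢
    rcases hζ with rfl | rfl | rfl | rfl <;> simp [inv_neg, Complex.inv_I]
  have hζ0 : ζ ≠ 0 := by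
    simp only [Set.mem_insert_iff, Set.mem_singleton_iff] at hζ
    rcases hζ with rfl | rfl | rfl | rfl <;> simp [Complex.I_ne_zero]
  have hnorm : ‖ζ‖ = 1 := by
    simp only [Set.mem_insert_iff, Set.mem_singleton_iff] at hζ
    rcases hζ with rfl | rfl | rfl | rfl <;> simp
  refine ⟨slp_smul_mem h σ γ d ζ hζ x hx, fun y hy => ?_⟩
  have hy' : ζ⁻¹ • y ∈ slpFeasible h σ γ d := by
    have := slp_smul_mem h σ γ (ζ • d) ζ⁻¹ hζ' y hy
    rwa [smul_smul, inv_mul_cancel₀ hζ0, one_smul] at this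
  have := hmin _ hy'
  rw [norm_smul, hnorm, one_mul]
  calc ‖x‖ ≤ ‖ζ⁻¹ • y‖ := this
    _ = ‖y‖ := by rw [norm_smul, norm_inv, hnorm]; simp
end

section
/- Let l ≤ θ ≤ u be real numbers with u − l ≤ π, let r ≥ 1, and set a = (cos l + cos u)/2, b = (sin l + sin u)/2. Then a·(r cos θ) + b·(r sin θ) ≥ a² + b². -/
theorem stmt_10 (l u θ r : ℝ) (hlθ : l ≤ θ) (hθu : θ ≤ u)
    (hπ : u - l ≤ Real.pi) (hr : 1 ≤ r) :
    ((Real.cos l + Real.cos u) / 2) * (r * Real.cos θ) +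
      ((Real.sin l + Real.sin u) / 2) * (r * Real.sin θ) ≥
    ((Real.cos l + Real.cos u) / 2) ^ 2 + ((Real.sin l + Real.sin u) / 2) ^ 2 := by
  have hlu : l ≤ u := hlθ.trans hθu
  set m := (l + u) / 2 with hm
  set d := (u - l) / 2 with hd
  have hd0 : 0 ≤ d := by simp only [hd]; linarith
  have hdπ : d ≤ Real.pi / 2 := by simp only [hd]; linarith
  have hc : 0 ≤ Real.cos d :=
    Real.cos_nonneg_of_mem_Icc ⟨by linarith [Real.pi_pos], hdπ⟩
  have ha : Real.cos l + Real.cos u = 2 * (Real.cos m * Real.cos d) := by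
    rw [Real.cos_add_cos]
    have : (l - u) / 2 = -d := by rw [hd]; ring
    rw [this, Real.cos_neg, hm]; ring
  have hb : Real.sin l + Real.sin u = 2 * (Real.sin m * Real.cos d) := by
    have h1 : l = m - d := by rw [hm, hd]; ring
    have h2 : u = m + d := by rw [hm, hd]; ring
    rw [h1, h2, Real.sin_sub, Real.sin_add]; ring
  have habs : |θ - m| ≤ d := by
    rw [abs_le]; constructor <;> (simp only [hm, hd]; linarith)
  have hk : Real.cos d ≤ Real.cos (θ - m) := by
    have := Real.cos_le_cos_of_nonneg_of_le_pi (abs_nonneg (θ - m))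
      (show d ≤ Real.pi by linarith [Real.pi_pos]) habs
    rwa [Real.cos_abs] at this
  have hkey : Real.cos m * Real.cos θ + Real.sin m * Real.sin θ
      = Real.cos (θ - m) := by
    rw [Real.cos_sub]; ring
  have hck : 0 ≤ Real.cos (θ - m) := hc.trans hk
  have h1 : Real.cos d * Real.cos d ≤ Real.cos d * Real.cos (θ - m) :=
    mul_le_mul_of_nonneg_left hk hc
  have h2 : Real.cos d * Real.cos (θ - m) ≤ r * (Real.cos d * Real.cos (θ - m)) :=
    le_mul_of_one_le_left (mul_nonneg hc hck) hr
  have hs : Real.sin m ^ 2 + Real.cos m ^ 2 = 1 := Real.sin_sq_add_cos_sq m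
  rw [ha, hb]
  have e1 : 2 * (Real.cos m * Real.cos d) / 2 * (r * Real.cos θ) +
      2 * (Real.sin m * Real.cos d) / 2 * (r * Real.sin θ)
      = r * (Real.cos d * Real.cos (θ - m)) := by rw [← hkey]; ring
  have e2 : (2 * (Real.cos m * Real.cos d) / 2) ^ 2 +
      (2 * (Real.sin m * Real.cos d) / 2) ^ 2 = Real.cos d * Real.cos d := by
    linear_combination Real.cos d ^ 2 * hs
  rw [e1, e2]
  exact h1.trans h2
end

section
/- Let l ≤ u be real numbers with u − l ≤ π. Then D[l,u] ⊆ P[l,u]; consequently, since P[l,u] is convex, the convex hull of D[l,u] is contained in P[l,u]. -/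
/-- The arc-cone set `D[l,u] = {(r cos θ, r sin θ) : r ≥ 1, l ≤ θ ≤ u}`. -/
def Darc (l u : ℝ) : Set (ℝ × ℝ) :=
  {p | ∃ r θ : ℝ, 1 ≤ r ∧ l ≤ θ ∧ θ ≤ u ∧ p = (r * Real.cos θ, r * Real.sin θ)}

/-- The polyhedron `P[l,u]` given by the two angular cuts and the chord cut. -/
def Parc (l u : ℝ) : Set (ℝ × ℝ) :=
  {p | Real.sin l * p.1 - Real.cos l * p.2 ≤ 0 ∧
       Real.sin u * p.1 - Real.cos u * p.2 ≥ 0 ∧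
       ((Real.cos l + Real.cos u) / 2) * p.1 + ((Real.sin l + Real.sin u) / 2) * p.2 ≥
         ((Real.cos l + Real.cos u) / 2) ^ 2 + ((Real.sin l + Real.sin u) / 2) ^ 2}

theorem stmt_12 (l u : ℝ) (hlu : l ≤ u) (hπ : u - l ≤ Real.pi) :
    Darc l u ⊆ Parc l u ∧ Convex ℝ (Parc l u) ∧
      convexHull ℝ (Darc l u) ⊆ Parc l u := by
  have hsub : Darc l u ⊆ Parc l u := by
    rintro p ⟨r, θ, hr, hl, hu, rfl⟩
    set m := (l + u) / 2 with hm
    set h := (u - l) / 2 with hh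
    have hl' : l = m - h := by rw [hm, hh]; ring
    have hu' : u = m + h := by rw [hm, hh]; ring
    have hh0 : 0 ≤ h := by rw [hh]; linarith
    have hhpi : h ≤ Real.pi / 2 := by rw [hh]; linarith
    have hch : 0 ≤ Real.cos h :=
      Real.cos_nonneg_of_mem_Icc ⟨by linarith, hhpi⟩
    have habs : |θ - m| ≤ h := by
      rw [abs_le]; constructor <;> · rw [hm, hh] at *; linarith
    have hcos1 : Real.cos h ≤ Real.cos (θ - m) := by
      rw [← Real.cos_abs (θ - m)]
      apply Real.cos_le_cos_of_nonneg_of_le_pi (abs_nonneg _) (by linarith [Real.pi_pos]) habs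
    have hs1 : 0 ≤ Real.sin (θ - l) :=
      Real.sin_nonneg_of_nonneg_of_le_pi (by linarith) (by linarith)
    have hs2 : 0 ≤ Real.sin (u - θ) :=
      Real.sin_nonneg_of_nonneg_of_le_pi (by linarith) (by linarith)
    have e1 : Real.sin (θ - l) = Real.sin θ * Real.cos l - Real.cos θ * Real.sin l :=
      Real.sin_sub θ l
    have e2 : Real.sin (u - θ) = Real.sin u * Real.cos θ - Real.cos u * Real.sin θ :=
      Real.sin_sub u θ
    have ea : (Real.cos l + Real.cos u) / 2 = Real.cos m * Real.cos h := by
      rw [hl', hu', Real.cos_sub, Real.cos_add]; ring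
    have eb : (Real.sin l + Real.sin u) / 2 = Real.sin m * Real.cos h := by
      rw [hl', hu', Real.sin_sub, Real.sin_add]; ring
    have ec : Real.cos (θ - m) = Real.cos θ * Real.cos m + Real.sin θ * Real.sin m :=
      Real.cos_sub θ m
    have hpm : Real.sin m ^ 2 + Real.cos m ^ 2 = 1 := Real.sin_sq_add_cos_sq m
    have hr0 : (0:ℝ) < r := lt_of_lt_of_le one_pos hr
    refine ⟨?_, ?_, ?_⟩
    · simp only
      nlinarith [mul_nonneg hr0.le hs1]
    · simp only
      nlinarith [mul_nonneg hr0.le hs2]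
    · have hq : (Real.cos m * Real.cos h)^2 + (Real.sin m * Real.cos h)^2
          = Real.cos h * Real.cos h := by
        linear_combination (Real.cos h)^2 * hpm
      have key : Real.cos h * Real.cos h ≤ r * (Real.cos h * Real.cos (θ - m)) := by
        calc Real.cos h * Real.cos h ≤ Real.cos h * Real.cos (θ - m) :=
              mul_le_mul_of_nonneg_left hcos1 hch
          _ ≤ r * (Real.cos h * Real.cos (θ - m)) :=
              le_mul_of_one_le_left (mul_nonneg hch (le_trans hch hcos1)) hr
      rw [ec] at key
      simp only [ea, eb]
      nlinarith [key, hq]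
  have hconv : Convex ℝ (Parc l u) := by
    rintro x ⟨hx1, hx2, hx3⟩ y ⟨hy1, hy2, hy3⟩ a b ha hb hab
    obtain rfl : b = 1 - a := by linarith
    refine ⟨?_, ?_, ?_⟩ <;> simp only [Parc, Set.mem_setOf_eq, Prod.smul_fst,
      Prod.smul_snd, Prod.fst_add, Prod.snd_add, smul_eq_mul]
    · linarith [mul_le_mul_of_nonneg_left hx1 ha, mul_le_mul_of_nonneg_left hy1 hb]
    · linarith [mul_le_mul_of_nonneg_left hx2 ha, mul_le_mul_of_nonneg_left hy2 hb]
    · linarith [mul_le_mul_of_nonneg_left hx3 ha, mul_le_mul_of_nonneg_left hy3 hb]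

  exact ⟨hsub, hconv, convexHull_min hsub hconv⟩
end

section
/- Let l ≤ u be real numbers with u − l ≤ π. Then every point of P[l,u] is a convex combination of at most two points of D[l,u]: for each (w,v) ∈ P[l,u] there exist r₁, r₂ ≥ 1, θ₁, θ₂ ∈ [l,u] and λ ∈ [0,1] such that (w,v) = λ·(r₁ cos θ₁, r₁ sin θ₁) + (1−λ)·(r₂ cos θ₂, r₂ sin θ₂). -/
/-!
If `0 < u - l < π`, Cramer's rule writes `p = s e(l) + t e(u)` with `e(θ) = (cos θ, sin θ)`;
the angular cuts give `s, t ≥ 0`, and since the chord functional takes the value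
`(1 + cos (u - l)) / 2 > 0` at both `e(l)` and `e(u)`, the chord cut gives `s + t ≥ 1`.
Hence `p` lies on the segment from `(s + t) e(l)` to `(s + t) e(u)`.
If `u = l`, then `P[l,l]` is the ray `{r e(l) : r ≥ 1}`. If `u - l = π`, then `P[l,u]` is the
closed half-plane left of `e(l)`, and each of its points is the midpoint of two points of the
half-plane far out along `±e(l)`, which lie in `D[l,u]`.
-/

open Real

lemma add_smul_mem_segment {E : Type*} [AddCommGroup E] [Module ℝ E] {s t : ℝ}
    (hs : 0 ≤ s) (ht : 0 ≤ t) (hst : 0 < s + t) (x y : E) :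
    s • x + t • y ∈ segment ℝ ((s + t) • x) ((s + t) • y) := by
  refine ⟨s / (s + t), t / (s + t), by positivity, by positivity, by field_simp, ?_⟩
  simp only [smul_smul, div_mul_cancel₀ _ hst.ne']

lemma smul_cos_sin_mem_Darc {l u r θ : ℝ} (hr : 1 ≤ r) (hlθ : l ≤ θ) (hθu : θ ≤ u) :
    r • ((cos θ, sin θ) : ℝ × ℝ) ∈ Darc l u :=
  ⟨r, θ, hr, hlθ, hθu, by simp⟩

lemma eq_smul_cos_sin_add_smul_cos_sin {l u : ℝ} (h : sin (u - l) ≠ 0) (p : ℝ × ℝ) :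
    p = ((sin u * p.1 - cos u * p.2) / sin (u - l)) • ((cos l, sin l) : ℝ × ℝ) +
      ((cos l * p.2 - sin l * p.1) / sin (u - l)) • ((cos u, sin u) : ℝ × ℝ) := by
  ext <;> simp only [Prod.fst_add, Prod.snd_add, Prod.smul_mk, smul_eq_mul] <;>
    field_simp <;> rw [sin_sub] <;> ring

lemma chord_smul_cos_sin_add_smul_cos_sin (l u s t : ℝ) :
    ((cos l + cos u) / 2) * (s * cos l + t * cos u) +
      ((sin l + sin u) / 2) * (s * sin l + t * sin u) = (s + t) * ((1 + cos (u - l)) / 2) := by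
  rw [cos_sub]
  linear_combination (s / 2) * sin_sq_add_cos_sq l + (t / 2) * sin_sq_add_cos_sq u

lemma chord_sq_add_sq (l u : ℝ) :
    ((cos l + cos u) / 2) ^ 2 + ((sin l + sin u) / 2) ^ 2 = (1 + cos (u - l)) / 2 := by
  rw [cos_sub]
  linear_combination (1 / 4) * sin_sq_add_cos_sq l + (1 / 4) * sin_sq_add_cos_sq u

lemma mem_Darc_of_mem_Parc_self {l : ℝ} {p : ℝ × ℝ} (hp : p ∈ Parc l l) : p ∈ Darc l l := by
  obtain ⟨h₁, h₂, h₃⟩ := hp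
  have hpyth := sin_sq_add_cos_sq l
  have hperp : sin l * p.1 - cos l * p.2 = 0 := le_antisymm h₁ h₂
  refine ⟨cos l * p.1 + sin l * p.2, l, by nlinarith, le_rfl, le_rfl, ?_⟩
  ext
  · linear_combination sin l * hperp - p.1 * hpyth
  · linear_combination -cos l * hperp - p.2 * hpyth

lemma exists_mem_segment_of_mem_Parc_of_lt_pi {l u : ℝ} (hlu : l < u) (hπ : u - l < π)
    {p : ℝ × ℝ} (hp : p ∈ Parc l u) :
    ∃ x ∈ Darc l u, ∃ y ∈ Darc l u, p ∈ segment ℝ x y := by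
  obtain ⟨h₁, h₂, h₃⟩ := hp
  have hsin : 0 < sin (u - l) := sin_pos_of_pos_of_lt_pi (sub_pos.2 hlu) hπ
  have hcos : 0 < (1 + cos (u - l)) / 2 := by
    have : cos (u - l) ^ 2 < 1 := by nlinarith [sin_sq_add_cos_sq (u - l)]
    nlinarith
  have hdecomp := eq_smul_cos_sin_add_smul_cos_sin hsin.ne' p
  set s := (sin u * p.1 - cos u * p.2) / sin (u - l)
  set t := (cos l * p.2 - sin l * p.1) / sin (u - l)
  have hs : 0 ≤ s := div_nonneg h₂ hsin.le
  have ht : 0 ≤ t := div_nonneg (by linarith) hsin.le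
  have hst : 1 ≤ s + t := by
    have hchord : (s + t) * ((1 + cos (u - l)) / 2) ≥ 1 * ((1 + cos (u - l)) / 2) := by
      rw [← chord_smul_cos_sin_add_smul_cos_sin, one_mul, ← chord_sq_add_sq]
      convert h₃ using 3 <;> rw [hdecomp] <;> simp
    exact le_of_mul_le_mul_right hchord hcos
  refine ⟨_, smul_cos_sin_mem_Darc hst le_rfl (by linarith), _,
    smul_cos_sin_mem_Darc hst (by linarith) le_rfl, ?_⟩
  rw [hdecomp]
  exact add_smul_mem_segment hs ht (by linarith) _ _

lemma mem_Darc_add_pi {l : ℝ} {q : ℝ × ℝ} (hq : 1 ≤ q.1 ^ 2 + q.2 ^ 2)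
    (hleft : sin l * q.1 - cos l * q.2 ≤ 0) : q ∈ Darc l (l + π) := by
  have hpyth := sin_sq_add_cos_sq l
  set x := cos l * q.1 + sin l * q.2
  set y := cos l * q.2 - sin l * q.1
  have hy : 0 ≤ y := by linarith
  have hxy : x ^ 2 + y ^ 2 = q.1 ^ 2 + q.2 ^ 2 := by
    linear_combination (q.1 ^ 2 + q.2 ^ 2) * hpyth
  set r := √(q.1 ^ 2 + q.2 ^ 2)
  have hr : 1 ≤ r := one_le_sqrt.2 hq
  have hr₀ : 0 < r := by linarith
  have hrsq : r ^ 2 = x ^ 2 + y ^ 2 := by rw [sq_sqrt (by positivity), hxy]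
  have hxr : |x / r| ≤ 1 := by
    rw [abs_div, abs_of_pos hr₀, div_le_one hr₀]
    exact abs_le_sqrt (by nlinarith)
  have hcos : cos (arccos (x / r)) = x / r := cos_arccos (neg_le_of_abs_le hxr) (le_of_abs_le hxr)
  have hsin : sin (arccos (x / r)) = y / r := by
    rw [sin_arccos, show 1 - (x / r) ^ 2 = (y / r) ^ 2 by field_simp; linarith,
      sqrt_sq (div_nonneg hy hr₀.le)]
  refine ⟨r, l + arccos (x / r), hr, le_add_of_nonneg_right (arccos_nonneg _),
    by linarith [arccos_le_pi (x / r)], ?_⟩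
  rw [cos_add, sin_add, hcos, hsin]
  ext <;> field_simp
  · linear_combination -q.1 * hpyth
  · linear_combination -q.2 * hpyth

lemma exists_mem_segment_of_mem_Parc_add_pi {l : ℝ} {p : ℝ × ℝ} (hp : p ∈ Parc l (l + π)) :
    ∃ x ∈ Darc l (l + π), ∃ y ∈ Darc l (l + π), p ∈ segment ℝ x y := by
  have hpyth := sin_sq_add_cos_sq l
  have hleft := hp.1
  set α := cos l * p.1 + sin l * p.2
  set β := cos l * p.2 - sin l * p.1
  have hmem : ∀ T, 1 ≤ |α + T| → p + T • ((cos l, sin l) : ℝ × ℝ) ∈ Darc l (l + π) := by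
    intro T hT
    apply mem_Darc_add_pi
    · have hnorm : (p.1 + T * cos l) ^ 2 + (p.2 + T * sin l) ^ 2 = (α + T) ^ 2 + β ^ 2 := by
        linear_combination (T ^ 2 - p.1 ^ 2 - p.2 ^ 2) * hpyth
      simp only [Prod.fst_add, Prod.snd_add, Prod.smul_mk, smul_eq_mul, hnorm]
      nlinarith [one_le_sq_iff_one_le_abs (α + T) |>.2 hT]
    · simp only [Prod.fst_add, Prod.snd_add, Prod.smul_mk, smul_eq_mul]
      linarith
  set T := |α| + 1
  refine ⟨_, hmem T (le_abs.2 (.inl (by linarith [neg_abs_le α]))),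
    _, hmem (-T) (le_abs.2 (.inr (by linarith [le_abs_self α]))), ?_⟩
  rw [neg_smul, ← sub_eq_add_neg]
  convert midpoint_mem_segment (𝕜 := ℝ) _ _
  exact (midpoint_add_sub ℝ _ _).symm

lemma exists_mem_segment_of_mem_Parc {l u : ℝ} (hlu : l ≤ u) (hπ : u - l ≤ π) {p : ℝ × ℝ}
    (hp : p ∈ Parc l u) : ∃ x ∈ Darc l u, ∃ y ∈ Darc l u, p ∈ segment ℝ x y := by
  rcases hlu.eq_or_lt with rfl | hlu
  · exact ⟨p, mem_Darc_of_mem_Parc_self hp, p, mem_Darc_of_mem_Parc_self hp, left_mem_segment ℝ p p⟩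
  rcases hπ.eq_or_lt with hπ | hπ
  · obtain rfl : u = l + π := by linarith
    exact exists_mem_segment_of_mem_Parc_add_pi hp
  · exact exists_mem_segment_of_mem_Parc_of_lt_pi hlu hπ hp

theorem stmt_13 (l u : ℝ) (hlu : l ≤ u) (hπ : u - l ≤ Real.pi) :
    ∀ p ∈ Parc l u, ∃ r₁ r₂ θ₁ θ₂ lam : ℝ,
      1 ≤ r₁ ∧ 1 ≤ r₂ ∧ l ≤ θ₁ ∧ θ₁ ≤ u ∧ l ≤ θ₂ ∧ θ₂ ≤ u ∧ 0 ≤ lam ∧ lam ≤ 1 ∧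
      p = lam • ((r₁ * Real.cos θ₁, r₁ * Real.sin θ₁) : ℝ × ℝ) +
          (1 - lam) • ((r₂ * Real.cos θ₂, r₂ * Real.sin θ₂) : ℝ × ℝ) := by
  intro p hp
  obtain ⟨_, ⟨r₁, θ₁, hr₁, hlθ₁, hθ₁u, rfl⟩, _, ⟨r₂, θ₂, hr₂, hlθ₂, hθ₂u, rfl⟩, a, b, ha, hb, hab,
    rfl⟩ := exists_mem_segment_of_mem_Parc hlu hπ hp
  obtain rfl : b = 1 - a := by linarith
  exact ⟨r₁, r₂, θ₁, θ₂, a, hr₁, hr₂, hlθ₁, hθ₁u, hlθ₂, hθ₂u, ha, by linarith, rfl⟩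
end

section
/- Let l be a real number and u = l + π. Then the convex hull (over ℝ) of D[l,u] equals the closed half-plane {(w,v) ∈ ℝ² : sin(l)·w − cos(l)·v ≤ 0}. -/
open Real

def halfPlane (l : ℝ) : Set (ℝ × ℝ) :=
  {p | sin l * p.1 - cos l * p.2 ≤ 0}

lemma convex_halfPlane (l : ℝ) : Convex ℝ (halfPlane l) :=
  convex_halfSpace_le (sin l • LinearMap.fst ℝ ℝ ℝ - cos l • LinearMap.snd ℝ ℝ ℝ).isLinear 0

lemma Darc_subset_halfPlane (l : ℝ) : Darc l (l + π) ⊆ halfPlane l := by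
  rintro p ⟨r, θ, hr, hlθ, hθu, rfl⟩
  have hsin : 0 ≤ sin (θ - l) := sin_nonneg_of_nonneg_of_le_pi (by linarith) (by linarith)
  have h : sin l * (r * cos θ) - cos l * (r * sin θ) = -(r * sin (θ - l)) := by
    rw [sin_sub]; ring
  change sin l * (r * cos θ) - cos l * (r * sin θ) ≤ 0
  rw [h]
  exact neg_nonpos.mpr (mul_nonneg (by linarith) hsin)

lemma sq_add_sq_eq_rotate (l x y : ℝ) :
    x ^ 2 + y ^ 2 = (cos l * x + sin l * y) ^ 2 + (cos l * y - sin l * x) ^ 2 := by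
  linear_combination (-(x ^ 2 + y ^ 2)) * sin_sq_add_cos_sq l

lemma exists_polar_of_nonneg {x y : ℝ} (hy : 0 ≤ y) :
    ∃ φ ∈ Set.Icc 0 π, √(x ^ 2 + y ^ 2) * cos φ = x ∧ √(x ^ 2 + y ^ 2) * sin φ = y := by
  set z : ℂ := ⟨x, y⟩
  have hz : ‖z‖ = √(x ^ 2 + y ^ 2) := Complex.norm_eq_sqrt_sq_add_sq z
  refine ⟨z.arg, ⟨Complex.arg_nonneg_iff.mpr hy, Complex.arg_le_pi z⟩, ?_, ?_⟩
  · rw [← hz, Complex.norm_mul_cos_arg]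
  · rw [← hz, Complex.norm_mul_sin_arg]

lemma mem_Darc_of_mem_halfPlane {l : ℝ} {q : ℝ × ℝ} (hq : q ∈ halfPlane l)
    (hnorm : 1 ≤ q.1 ^ 2 + q.2 ^ 2) : q ∈ Darc l (l + π) := by
  obtain ⟨φ, ⟨hφ₀, hφπ⟩, hc, hs⟩ :=
    exists_polar_of_nonneg (x := cos l * q.1 + sin l * q.2) (y := cos l * q.2 - sin l * q.1)
      (by change sin l * q.1 - cos l * q.2 ≤ 0 at hq; linarith)
  rw [← sq_add_sq_eq_rotate] at hc hs
  refine ⟨√(q.1 ^ 2 + q.2 ^ 2), l + φ, one_le_sqrt.mpr hnorm, by linarith, by linarith, ?_⟩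
  have hpyth := sin_sq_add_cos_sq l
  ext
  · rw [cos_add]; linear_combination (-cos l) * hc + sin l * hs - q.1 * hpyth
  · rw [sin_add]; linear_combination (-sin l) * hc - cos l * hs - q.2 * hpyth

lemma halfPlane_subset_convexHull_Darc (l : ℝ) : halfPlane l ⊆ convexHull ℝ (Darc l (l + π)) := by
  intro p hp
  set x := cos l * p.1 + sin l * p.2
  set T := |x| + 1
  set e : ℝ × ℝ := (cos l, sin l)
  have hpyth := sin_sq_add_cos_sq l
  have add_smul_mem {t : ℝ} (ht : 1 ≤ (x + t) ^ 2) : p + t • e ∈ Darc l (l + π) := by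
    refine mem_Darc_of_mem_halfPlane ?_ ?_
    · change sin l * (p.1 + t * cos l) - cos l * (p.2 + t * sin l) ≤ 0
      change sin l * p.1 - cos l * p.2 ≤ 0 at hp
      linarith
    · change 1 ≤ (p.1 + t * cos l) ^ 2 + (p.2 + t * sin l) ^ 2
      rw [sq_add_sq_eq_rotate l]
      have hx : cos l * (p.1 + t * cos l) + sin l * (p.2 + t * sin l) = x + t := by
        linear_combination t * hpyth
      rw [hx]
      exact le_add_of_le_of_nonneg ht (sq_nonneg _)
  have hplus : p + T • e ∈ Darc l (l + π) :=
    add_smul_mem (one_le_sq_iff_one_le_abs _ |>.mpr (by rw [abs_of_pos] <;> linarith [neg_abs_le x]))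
  have hminus : p - T • e ∈ Darc l (l + π) := by
    rw [sub_eq_add_neg, ← neg_smul]
    exact add_smul_mem (one_le_sq_iff_one_le_abs _ |>.mpr
      (by rw [abs_of_neg] <;> linarith [le_abs_self x]))
  exact (convex_convexHull ℝ _).segment_subset (subset_convexHull ℝ _ hminus)
    (subset_convexHull ℝ _ hplus) (mem_segment_sub_add p (T • e))

theorem stmt_15 (l : ℝ) :
    convexHull ℝ (Darc l (l + Real.pi)) =
      {p : ℝ × ℝ | Real.sin l * p.1 - Real.cos l * p.2 ≤ 0} :=
  (convexHull_min (Darc_subset_halfPlane l) (convex_halfPlane l)).antisymm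
    (halfPlane_subset_convexHull_Darc l)
end
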